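/- arXiv:2506.14996 — 3 statements merged into one kernel-verified Lean document; each statement's English description precedes it below -/
import Mathlib

section
/- For positive integers m, n, l, the sum over non-negative integers s₁,...,s_l with s₁ + ... + s_l = n - 1 of the expression ((mn - s₂ - s₃ - ... - s_l - 1)/((mn-1)·n)) · C(n, s₁) · C(mn-1, s₂) · ... · C(mn-1, s_l) equals ((1 + (l-1)(m-1))/(n-1)) · C(n - 1 + (l-1)(mn-1), n-2), where C denotes the binomial coefficient. (Assume n ≥ 2 so the denominators are nonzero.) -/
/-!
Split each tuple into its head `s₁` and its tail. Vandermonde's identity sums the tail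
products to `C((l-1)(mn-1), t)`, where `t = n-1-s₁`, so only a sum over the antidiagonal
`s₁ + t = n-1` is left. On it the weight `mn-1-t` equals `(m-1)n + s₁`: the constant part
is again a Vandermonde sum, and in the other part `s₁ C(n, s₁) = n C(n-1, s₁-1)` gives
`n C(n-1+(l-1)(mn-1), n-2)`. The absorption identity `(a+1) C(a, b) = (b+1) C(a+1, b+1)`
rewrites the first of these binomials in terms of the second.
-/

open Finset

namespace Finset.Nat

theorem sum_antidiagonalTuple_succ {M : Type*} [AddCommMonoid M] (k n : ℕ)
    (f : (Fin (k + 1) → ℕ) → M) :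
    ∑ s ∈ antidiagonalTuple (k + 1) n, f s =
      ∑ p ∈ antidiagonal n, ∑ t ∈ antidiagonalTuple k p.2, f (Fin.cons p.1 t) := by
  change (List.map f (List.Nat.antidiagonalTuple (k + 1) n)).sum = _
  simp only [List.Nat.antidiagonalTuple, List.flatMap_def, List.map_flatten, List.sum_flatten,
    List.map_map, Function.comp_def]
  exact rfl

theorem sum_antidiagonalTuple_prod_choose (k c N : ℕ) :
    ∑ t ∈ antidiagonalTuple k c, ∏ i, N.choose (t i) = (k * N).choose c := by
  induction k generalizing c with
  | zero => cases c <;> simp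
  | succ k ih =>
    simp only [sum_antidiagonalTuple_succ, Fin.prod_univ_succ, Fin.cons_zero, Fin.cons_succ,
      ← mul_sum, ih]
    rw [show (k + 1) * N = N + k * N by ring, Nat.add_choose_eq]

theorem sum_antidiagonalTuple_succ_mul_prod_choose {R : Type*} [CommSemiring R]
    (g : ℕ → ℕ → R) (L N c : ℕ) :
    ∑ s ∈ antidiagonalTuple (L + 1) c,
        g (s 0) (∑ i : Fin L, s i.succ) * ∏ i : Fin L, (N.choose (s i.succ) : R) =
      ∑ p ∈ antidiagonal c, g p.1 p.2 * ((L * N).choose p.2 : R) := by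
  rw [sum_antidiagonalTuple_succ]
  refine sum_congr rfl fun p _ => ?_
  simp only [Fin.cons_zero, Fin.cons_succ]
  calc ∑ t ∈ antidiagonalTuple L p.2, g p.1 (∑ i, t i) * ∏ i, (N.choose (t i) : R)
      = ∑ t ∈ antidiagonalTuple L p.2, g p.1 p.2 * ∏ i, (N.choose (t i) : R) :=
        sum_congr rfl fun t ht => by rw [mem_antidiagonalTuple.mp ht]
    _ = g p.1 p.2 * ((L * N).choose p.2 : R) := by
        rw [← mul_sum, ← sum_antidiagonalTuple_prod_choose]
        push_cast
        rfl

theorem sum_antidiagonal_fst_mul_choose_mul_choose (a b c : ℕ) :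
    ∑ p ∈ antidiagonal (c + 1), p.1 * (a + 1).choose p.1 * b.choose p.2 =
      (a + 1) * (a + b).choose c := by
  rw [sum_antidiagonal_succ, Nat.add_choose_eq a b c, mul_sum]
  simp only [zero_mul, zero_add]
  refine sum_congr rfl fun p _ => ?_
  rw [← mul_assoc, Nat.add_one_mul_choose_eq]
  ring

theorem add_one_mul_sum_antidiagonal_add_mul_choose_mul_choose {R : Type*} [CommSemiring R]
    (x : R) (k M : ℕ) :
    (k + 1) * ∑ p ∈ antidiagonal (k + 1), (x + p.1) * (k + 2).choose p.1 * M.choose p.2 =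
      (x * (k + 2 + M) + (k + 1) * (k + 2)) * (k + 1 + M).choose k := by
  have vandermonde : ∑ p ∈ antidiagonal (k + 1), ((k + 2).choose p.1 * M.choose p.2 : R) =
      (k + 2 + M).choose (k + 1) := by
    simpa using congrArg (Nat.cast (R := R)) (Nat.add_choose_eq (k + 2) M (k + 1)).symm
  have weighted : ∑ p ∈ antidiagonal (k + 1), (p.1 * (k + 2).choose p.1 * M.choose p.2 : R) =
      (k + 2) * (k + 1 + M).choose k := by
    simpa [add_assoc] using
      congrArg (Nat.cast (R := R)) (sum_antidiagonal_fst_mul_choose_mul_choose (k + 1) M k)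
  have absorb : ((k + 1) * (k + 2 + M).choose (k + 1) : R) =
      (k + 2 + M) * (k + 1 + M).choose k := by
    have h := Nat.add_one_mul_choose_eq (k + 1 + M) k
    rw [show k + 1 + M + 1 = k + 2 + M by ring] at h
    have h' := congrArg (Nat.cast (R := R)) h
    push_cast at h'
    rw [mul_comm, h']
  have expand : ∀ p : ℕ × ℕ, (x + p.1) * (k + 2).choose p.1 * M.choose p.2 =
      x * ((k + 2).choose p.1 * M.choose p.2) + p.1 * (k + 2).choose p.1 * M.choose p.2 :=
    fun p => by ring
  simp only [expand, sum_add_distrib, ← mul_sum, vandermonde, weighted, mul_add]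
  rw [mul_left_comm, absorb]
  ring

theorem sum_antidiagonal_weighted_choose_mul_choose {K : Type*} [Field K] [CharZero K]
    (m k M : ℕ) :
    ∑ p ∈ antidiagonal (k + 1),
        ((m : K) * (k + 2) - p.2 - 1) / (((m : K) * (k + 2) - 1) * (k + 2)) *
          (k + 2).choose p.1 * M.choose p.2 =
      ((m : K) * (k + 2) - 1 + (m - 1) * M) / (((m : K) * (k + 2) - 1) * (k + 1)) *
        (k + 1 + M).choose k := by
  have hD : (m : K) * (k + 2) - 1 ≠ 0 := by
    have hne : m * (k + 2) ≠ 1 := fun h => by have := Nat.eq_one_of_mul_eq_one_left h; omega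
    rw [sub_ne_zero]
    exact_mod_cast hne
  have hk : (k : K) + 2 ≠ 0 := by exact_mod_cast (k + 1).succ_ne_zero
  have pointwise : ∀ p ∈ antidiagonal (k + 1),
      ((m : K) * (k + 2) - p.2 - 1) / (((m : K) * (k + 2) - 1) * (k + 2)) *
          (k + 2).choose p.1 * M.choose p.2 =
        ((m - 1) * (k + 2) + p.1) * (k + 2).choose p.1 * M.choose p.2 /
          (((m : K) * (k + 2) - 1) * (k + 2)) := by
    intro p hp
    have hp : (p.1 : K) + p.2 = k + 1 := by exact_mod_cast mem_antidiagonal.mp hp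
    rw [div_mul_eq_mul_div, div_mul_eq_mul_div]
    congr 3
    linear_combination -hp
  have collapse :=
    add_one_mul_sum_antidiagonal_add_mul_choose_mul_choose ((m - 1) * (k + 2) : K) k M
  rw [sum_congr rfl pointwise, ← sum_div,
    eq_div_of_mul_eq (Nat.cast_add_one_ne_zero k) ((mul_comm _ _).trans collapse)]
  field_simp
  ring

end Finset.Nat

/-- For positive integers `m, n, l` with `n ≥ 2`, the sum over tuples
`(s₁, …, s_l)` of non-negative integers with `s₁ + ⋯ + s_l = n - 1` of
`((mn - s₂ - ⋯ - s_l - 1)/((mn-1)·n)) · C(n, s₁) · C(mn-1, s₂) ⋯ C(mn-1, s_l)`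
equals `((1 + (l-1)(m-1))/(n-1)) · C(n - 1 + (l-1)(mn-1), n-2)`. -/
theorem stmt3 (m n l : ℕ) (hm : 0 < m) (hn : 2 ≤ n) (hl : 0 < l) :
    ∑ s ∈ Finset.Nat.antidiagonalTuple l (n - 1),
      ((((m * n : ℚ)) - (∑ i ∈ Finset.univ.erase (⟨0, hl⟩ : Fin l), (s i : ℚ)) - 1) /
          (((m * n : ℚ) - 1) * (n : ℚ))) *
        (Nat.choose n (s ⟨0, hl⟩) : ℚ) *
        ∏ i ∈ Finset.univ.erase (⟨0, hl⟩ : Fin l), (Nat.choose (m * n - 1) (s i) : ℚ) =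
      ((1 + ((l : ℚ) - 1) * ((m : ℚ) - 1)) / ((n : ℚ) - 1)) *
        (Nat.choose (n - 1 + (l - 1) * (m * n - 1)) (n - 2) : ℚ) := by
  obtain ⟨L, rfl⟩ : ∃ L, l = L + 1 := ⟨l - 1, by omega⟩
  obtain ⟨k, rfl⟩ : ∃ k, n = k + 2 := ⟨n - 2, by omega⟩
  have hmn : 2 ≤ m * (k + 2) := Nat.le_mul_of_pos_left _ hm |>.trans' (by omega)
  simp only [Fin.mk_zero, Fin.univ_succ, erase_cons, sum_map, prod_map,
    Function.Embedding.coeFn_mk, ← Nat.cast_sum, show k + 2 - 1 = k + 1 by omega,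
    Nat.add_sub_cancel]
  rw [Nat.sum_antidiagonalTuple_succ_mul_prod_choose fun a b =>
    ((m * (k + 2 : ℕ) : ℚ) - b - 1) / ((m * (k + 2 : ℕ) - 1) * (k + 2 : ℕ)) *
      (k + 2).choose a]
  push_cast
  rw [Nat.sum_antidiagonal_weighted_choose_mul_choose]
  have hD : (m : ℚ) * (k + 2) - 1 ≠ 0 := by
    have : (2 : ℚ) ≤ m * (k + 2) := by exact_mod_cast hmn
    linarith
  push_cast [Nat.cast_sub (one_le_two.trans hmn)]
  rw [show (k : ℚ) + 2 - 1 = k + 1 by ring]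
  field_simp
  ring
end

section
/- Let m, n be positive integers, ρ a positive divisor of 2mn - 2, and ω = exp(2πi/ρ). Then the limit as q → ω of qbinom_{q²}((m+1)n - 1, n) (the Gaussian binomial in the variable q²) equals C(⌊2((m+1)n-1)/ρ⌋, ⌊2n/ρ⌋) if ρ is even, and equals C(⌊((m+1)n-1)/ρ⌋, ⌊n/ρ⌋) if ρ is odd. -/
open Filter Topology

/-- The `q`-integer `[k]_q = 1 + q + ⋯ + q^{k-1}`. -/
noncomputable def qInt (q : ℂ) (k : ℕ) : ℂ := ∑ i ∈ Finset.range k, q ^ i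

/-- The `q`-factorial `[k]_q!`. -/
noncomputable def qFact (q : ℂ) : ℕ → ℂ
  | 0 => 1
  | k + 1 => qFact q k * qInt q (k + 1)

/-- The Gaussian binomial coefficient `qbinom(M, r) = [M]_q! / ([r]_q! [M-r]_q!)`. -/
noncomputable def qBinom (q : ℂ) (M r : ℕ) : ℂ :=
  qFact q M / (qFact q r * qFact q (M - r))

/-! Near a primitive `d`-th root of unity `ζ` with `d ∣ M - n`, the Gaussian binomial is
`∏_{i<n} (1 - Q^(M-n+i+1)) / (1 - Q^(i+1))`. As `ζ^(M-n) = 1`, the `i`-th factor tends to `1`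
unless `d ∣ i + 1`, and then, by l'Hôpital, to `(M-n+i+1)/(i+1) = (K+u)/u`, where `M - n = dK`
and `i + 1 = du`; these limits multiply to `C(M/d, n/d)`. The theorem is the case `ζ = ω²`, a
primitive root of order `ρ / gcd(ρ, 2)`, which divides `mn - 1` because `ρ ∣ 2(mn - 1)`. -/

lemma qFact_eq_prod (q : ℂ) (k : ℕ) : qFact q k = ∏ i ∈ Finset.range k, qInt q (i + 1) := by
  induction k with
  | zero => rfl
  | succ k ih => rw [qFact, ih, Finset.prod_range_succ]

lemma qFact_add (q : ℂ) (s n : ℕ) :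
    qFact q (s + n) = qFact q s * ∏ i ∈ Finset.range n, qInt q (s + i + 1) := by
  simp only [qFact_eq_prod, Finset.prod_range_add, add_assoc]

lemma qInt_eq_div {q : ℂ} (hq : q ≠ 1) (k : ℕ) : qInt q k = (1 - q ^ k) / (1 - q) := by
  rw [qInt, geom_sum_eq hq, ← neg_div_neg_eq, neg_sub, neg_sub]

lemma qInt_ne_zero {q : ℂ} {k : ℕ} (hqk : q ^ k ≠ 1) : qInt q k ≠ 0 := by
  have hq : q ≠ 1 := by rintro rfl; exact hqk (one_pow k)
  rw [qInt_eq_div hq]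
  exact div_ne_zero (sub_ne_zero.mpr hqk.symm) (sub_ne_zero.mpr hq.symm)

lemma qFact_ne_zero {q : ℂ} {N : ℕ} (hq : ∀ k ∈ Finset.Icc 1 N, q ^ k ≠ 1) : qFact q N ≠ 0 := by
  rw [qFact_eq_prod, Finset.prod_ne_zero_iff]
  intro i hi
  exact qInt_ne_zero (hq (i + 1) (by simp only [Finset.mem_range, Finset.mem_Icc] at hi ⊢; omega))

lemma qBinom_eq_prod {Q : ℂ} {M n : ℕ} (hnM : n ≤ M) (hQ : ∀ k ∈ Finset.Icc 1 M, Q ^ k ≠ 1) :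
    qBinom Q M n = ∏ i ∈ Finset.range n, (1 - Q ^ (M - n + i + 1)) / (1 - Q ^ (i + 1)) := by
  obtain ⟨s, rfl⟩ := Nat.exists_eq_add_of_le' hnM
  have hs : qFact Q s ≠ 0 := qFact_ne_zero fun k hk ↦
    hQ k (by simp only [Finset.mem_Icc] at hk ⊢; omega)
  rw [qBinom, qFact_add, Nat.add_sub_cancel, mul_comm (qFact Q n), mul_div_mul_left _ _ hs,
    qFact_eq_prod, ← Finset.prod_div_distrib]
  refine Finset.prod_congr rfl fun i hi ↦ ?_
  have hQ1 : Q ≠ 1 := by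
    rintro rfl
    exact hQ 1 (by simp only [Finset.mem_range, Finset.mem_Icc] at hi ⊢; omega) (one_pow 1)
  rw [qInt_eq_div hQ1, qInt_eq_div hQ1, div_div_div_cancel_right₀ (sub_ne_zero.mpr hQ1.symm)]

lemma eventually_nhdsNE_forall_pow_ne_one {K : Type*} [Field K] [TopologicalSpace K] [T1Space K]
    (ζ : K) (N : ℕ) : ∀ᶠ Q in 𝓝[≠] ζ, ∀ k ∈ Finset.Icc 1 N, Q ^ k ≠ 1 := by
  refine (eventually_all_finset _).2 fun k hk ↦ ?_
  have hk : 0 < k := (Finset.mem_Icc.1 hk).1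
  filter_upwards [nhdsNE_of_nhdsNE_sdiff_finite univ_mem
    (Polynomial.nthRootsFinset k (1 : K)).finite_toSet] with Q hQ
  simpa [Polynomial.mem_nthRootsFinset hk] using hQ

lemma natCast_mul_pow_pred_eq_of_pow_eq_one {K : Type*} [Field K] {ζ : K} {a : ℕ}
    (h : ζ ^ a = 1) : (a : K) * ζ ^ (a - 1) = a * ζ⁻¹ := by
  cases a with
  | zero => simp
  | succ a =>
    have h' : ζ ^ a * ζ = 1 := by rwa [← pow_succ]
    rw [Nat.add_sub_cancel, eq_inv_of_mul_eq_one_left h']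

theorem tendsto_one_sub_pow_div_one_sub_pow_of_pow_eq_one {𝕜 : Type*} [NontriviallyNormedField 𝕜]
    [CharZero 𝕜] {ζ : 𝕜} {a b : ℕ} (hb : 0 < b) (hζa : ζ ^ a = 1) (hζb : ζ ^ b = 1) :
    Tendsto (fun q ↦ (1 - q ^ a) / (1 - q ^ b)) (𝓝[≠] ζ) (𝓝 (a / b : 𝕜)) := by
  have hζ : ζ ≠ 0 := by rintro rfl; simp [hb.ne'] at hζb
  have hf := hasDerivAt_iff_tendsto_slope.mp ((hasDerivAt_pow a ζ).const_sub 1)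
  have hg := hasDerivAt_iff_tendsto_slope.mp ((hasDerivAt_pow b ζ).const_sub 1)
  rw [natCast_mul_pow_pred_eq_of_pow_eq_one hζa] at hf
  rw [natCast_mul_pow_pred_eq_of_pow_eq_one hζb] at hg
  have hg' : -((b : 𝕜) * ζ⁻¹) ≠ 0 := by simp [hb.ne', hζ]
  convert (hf.div hg hg').congr' ?_ using 2
  · rw [neg_div_neg_eq, mul_div_mul_right _ _ (inv_ne_zero hζ)]
  · filter_upwards [self_mem_nhdsWithin] with q hq
    simp only [Pi.div_apply, slope_def_field, hζa, hζb, sub_self, sub_zero]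
    exact div_div_div_cancel_right₀ (sub_ne_zero.mpr hq) _ _

theorem tendsto_one_sub_pow_div_one_sub_pow_of_pow_ne_one {K : Type*} [Field K]
    [TopologicalSpace K] [IsTopologicalDivisionRing K] {ζ : K} {a b : ℕ} (hab : ζ ^ a = ζ ^ b)
    (hζb : ζ ^ b ≠ 1) : Tendsto (fun q ↦ (1 - q ^ a) / (1 - q ^ b)) (𝓝[≠] ζ) (𝓝 1) := by
  have hden : (1 : K) - ζ ^ b ≠ 0 := sub_ne_zero.mpr (Ne.symm hζb)
  have hcont : ContinuousAt (fun q : K ↦ (1 - q ^ a) / (1 - q ^ b)) ζ := by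
    fun_prop (disch := exact hden)
  simpa [hab, div_self hden] using hcont.tendsto.mono_left nhdsWithin_le_nhds

lemma tendsto_pow_two_nhdsNE {𝕜 : Type*} [NormedField 𝕜] [CharZero 𝕜] {ω : 𝕜} (hω : ω ≠ 0) :
    Tendsto (fun q ↦ q ^ 2) (𝓝[≠] ω) (𝓝[≠] (ω ^ 2)) := by
  refine tendsto_nhdsWithin_iff.2 ⟨((continuous_pow 2).tendsto ω).mono_left nhdsWithin_le_nhds, ?_⟩
  have hadd : ∀ᶠ q in 𝓝 ω, q + ω ≠ 0 :=
    (continuous_id.add continuous_const).continuousAt.eventually_ne (by simp [← two_mul, hω])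
  filter_upwards [self_mem_nhdsWithin, nhdsWithin_le_nhds hadd] with q hq hqω
  simpa [sq_eq_sq_iff_eq_or_eq_neg, eq_neg_iff_add_eq_zero] using And.intro hq hqω

lemma prod_range_ite_dvd {M : Type*} [CommMonoid M] (g : ℕ → M) (d n : ℕ) :
    ∏ i ∈ Finset.range n, (if d ∣ i + 1 then g ((i + 1) / d) else 1) =
      ∏ j ∈ Finset.range (n / d), g (j + 1) := by
  induction n with
  | zero => simp
  | succ n ih =>
    rw [Finset.prod_range_succ, ih]
    by_cases h : d ∣ n + 1
    · rw [if_pos h, Nat.succ_div_of_dvd h, Finset.prod_range_succ]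
    · rw [if_neg h, Nat.succ_div_of_not_dvd h, mul_one]

lemma cast_choose_add_eq_prod {F : Type*} [Field F] [CharZero F] (K t : ℕ) :
    (Nat.choose (K + t) t : F) =
      ∏ j ∈ Finset.range t, ((K + (j + 1) : ℕ) : F) / ((j + 1 : ℕ) : F) := by
  induction t with
  | zero => simp
  | succ t ih =>
    rw [Finset.prod_range_succ, ← ih, mul_div_assoc',
      eq_div_iff (Nat.cast_ne_zero.2 t.succ_ne_zero), ← add_assoc]
    exact_mod_cast (Nat.add_one_mul_choose_eq (K + t) t).symm.trans (mul_comm _ _)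

theorem tendsto_qBinom_of_isPrimitiveRoot {ζ : ℂ} {d M n : ℕ} (hζ : IsPrimitiveRoot ζ d)
    (hnM : n ≤ M) (hd : d ∣ M - n) :
    Tendsto (fun Q ↦ qBinom Q M n) (𝓝[≠] ζ) (𝓝 (Nat.choose (M / d) (n / d) : ℂ)) := by
  obtain ⟨K, hK⟩ := hd
  have hζs : ζ ^ (M - n) = 1 := (hζ.pow_eq_one_iff_dvd _).2 ⟨K, hK⟩
  have hfactor : ∀ i ∈ Finset.range n,
      Tendsto (fun Q ↦ (1 - Q ^ (M - n + i + 1)) / (1 - Q ^ (i + 1))) (𝓝[≠] ζ)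
        (𝓝 (if d ∣ i + 1 then ((K + (i + 1) / d : ℕ) : ℂ) / ((i + 1) / d : ℕ) else 1)) := by
    intro i _
    have hab : ζ ^ (M - n + i + 1) = ζ ^ (i + 1) := by rw [add_assoc, pow_add, hζs, one_mul]
    split_ifs with hdi
    · have hζi : ζ ^ (i + 1) = 1 := (hζ.pow_eq_one_iff_dvd _).2 hdi
      convert tendsto_one_sub_pow_div_one_sub_pow_of_pow_eq_one i.add_one_pos (hab.trans hζi) hζi
        using 2
      obtain ⟨u, hu⟩ := hdi
      have hd0 : d ≠ 0 := by rintro rfl; omega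
      have hnum : M - n + i + 1 = d * (K + u) := by rw [mul_add, ← hK, ← hu]; omega
      rw [hnum, hu, Nat.mul_div_cancel_left _ (Nat.pos_of_ne_zero hd0), Nat.cast_mul, Nat.cast_mul,
        mul_div_mul_left _ _ (Nat.cast_ne_zero.2 hd0 : (d : ℂ) ≠ 0)]
    · exact tendsto_one_sub_pow_div_one_sub_pow_of_pow_ne_one hab
        (mt (hζ.pow_eq_one_iff_dvd _).1 hdi)
  have hlim := (tendsto_finsetProd _ hfactor).congr' <| by
    filter_upwards [eventually_nhdsNE_forall_pow_ne_one ζ M] with Q hQ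
    exact (qBinom_eq_prod hnM hQ).symm
  have hchoose : (K + n / d).choose (n / d) = (M / d).choose (n / d) := by
    rcases d.eq_zero_or_pos with rfl | hd
    · simp
    · rw [show M = d * K + n by omega, Nat.mul_add_div hd]
  rwa [prod_range_ite_dvd (fun j ↦ ((K + j : ℕ) : ℂ) / (j : ℕ)), ← cast_choose_add_eq_prod,
    hchoose] at hlim

lemma div_div_gcd_two_eq_ite (ρ x : ℕ) :
    x / (ρ / ρ.gcd 2) = if ρ % 2 = 0 then 2 * x / ρ else x / ρ := by
  rcases Nat.even_or_odd' ρ with ⟨k, rfl | rfl⟩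
  · simp [Nat.mul_div_mul_left x k two_pos]
  · simp [Nat.add_mod]

theorem stmt11_general (m n ρ : ℕ) (hm : 0 < m) (hρ : 0 < ρ)
    (hdvd : ρ ∣ 2 * m * n - 2) :
    Tendsto (fun q : ℂ => qBinom (q ^ 2) ((m + 1) * n - 1) n)
      (𝓝[≠] (Complex.exp (2 * (Real.pi : ℂ) * Complex.I / (ρ : ℂ))))
      (𝓝 (if ρ % 2 = 0 then
            (Nat.choose (2 * ((m + 1) * n - 1) / ρ) (2 * n / ρ) : ℂ)
          else (Nat.choose (((m + 1) * n - 1) / ρ) (n / ρ) : ℂ))) := by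
  set ω := Complex.exp (2 * (Real.pi : ℂ) * Complex.I / (ρ : ℂ))
  have hω : IsPrimitiveRoot ω ρ := Complex.isPrimitiveRoot_exp ρ hρ.ne'
  have hω2 : IsPrimitiveRoot (ω ^ 2) (ρ / ρ.gcd 2) := by
    rw [hω.eq_orderOf, ← orderOf_pow' ω two_ne_zero]
    exact IsPrimitiveRoot.orderOf _
  have hmn : n = 0 ∨ 0 < m * n := n.eq_zero_or_pos.imp_right (Nat.mul_pos hm)
  have hM : (m + 1) * n - 1 - n = m * n - 1 := by rw [add_one_mul]; omega
  have hnM : n ≤ (m + 1) * n - 1 := by rw [add_one_mul]; omega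
  have hdvd' : ρ / ρ.gcd 2 ∣ (m + 1) * n - 1 - n := by
    refine hω2.dvd_of_pow_eq_one _ ?_
    rw [← pow_mul, hω.pow_eq_one_iff_dvd, hM]
    convert hdvd using 1
    rw [mul_assoc]
    omega
  have hlim := (tendsto_qBinom_of_isPrimitiveRoot hω2 hnM hdvd').comp
    (tendsto_pow_two_nhdsNE (hω.ne_zero hρ.ne'))
  rw [div_div_gcd_two_eq_ite, div_div_gcd_two_eq_ite] at hlim
  split_ifs at hlim ⊢ <;> exact hlim

/-- Let `m, n` be positive integers, `ρ` a positive divisor of `2mn - 2`, and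
`ω = exp(2πi/ρ)`.  Then the limit as `q → ω` of `qbinom_{q²}((m+1)n - 1, n)` equals
`C(⌊2((m+1)n-1)/ρ⌋, ⌊2n/ρ⌋)` if `ρ` is even, and `C(⌊((m+1)n-1)/ρ⌋, ⌊n/ρ⌋)` if `ρ` is odd. -/
theorem stmt11 (m n ρ : ℕ) (hm : 0 < m) (hn : 0 < n) (hρ : 0 < ρ)
    (hdvd : ρ ∣ 2 * m * n - 2) :
    Tendsto (fun q : ℂ => qBinom (q ^ 2) ((m + 1) * n - 1) n)
      (𝓝[≠] (Complex.exp (2 * (Real.pi : ℂ) * Complex.I / (ρ : ℂ))))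
      (𝓝 (if ρ % 2 = 0 then
            (Nat.choose (2 * ((m + 1) * n - 1) / ρ) (2 * n / ρ) : ℂ)
          else (Nat.choose (((m + 1) * n - 1) / ρ) (n / ρ) : ℂ))) :=
  stmt11_general m n ρ hm hρ hdvd
end

section
/- For positive integers m and n with n ≥ 2 and m(n-1) ≥ n, the identity C(m(n-1) - 1, n - 1) + 2·C(m(n-1) - 1, n) = ((2m(n-1) - n)/n) · C(m(n-1) - 1, n - 1) holds. -/
/-! With `N = m(n-1)`, the absorption identity `n·C(N-1, n) = (N-n)·C(N-1, n-1)` turns the left-hand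
side into `(1 + 2(N-n)/n)·C(N-1, n-1) = ((2N-n)/n)·C(N-1, n-1)`. -/

/-- The absorption identity with honest subtraction; for `a < k` both sides vanish. -/
theorem Nat.cast_choose_succ_mul {R : Type*} [Ring R] (a k : ℕ) :
    (a.choose (k + 1) : R) * (k + 1) = a.choose k * ((a : R) - k) := by
  rcases le_or_gt k a with hka | hak
  · rw [← Nat.cast_sub hka]
    exact_mod_cast congrArg (Nat.cast : ℕ → R) (Nat.choose_succ_right_eq a k)
  · simp [Nat.choose_eq_zero_of_lt hak, Nat.choose_eq_zero_of_lt (hak.trans (Nat.lt_succ_self k))]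

theorem stmt18_general (m n : ℕ) (hm : 0 < m) (hn : 2 ≤ n) :
    (Nat.choose (m * (n - 1) - 1) (n - 1) : ℚ) +
        2 * (Nat.choose (m * (n - 1) - 1) n : ℚ) =
      ((2 * (m : ℚ) * ((n : ℚ) - 1) - (n : ℚ)) / (n : ℚ)) *
        (Nat.choose (m * (n - 1) - 1) (n - 1) : ℚ) := by
  have hN : 1 ≤ m * (n - 1) := Nat.mul_pos hm (by omega)
  have absorb := Nat.cast_choose_succ_mul (R := ℚ) (m * (n - 1) - 1) (n - 1)
  rw [Nat.sub_add_cancel (by omega : 1 ≤ n)] at absorb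
  push_cast [hN, Nat.cast_sub (by omega : 1 ≤ n)] at absorb ⊢
  have hn0 : (n : ℚ) ≠ 0 := by positivity
  field_simp
  linear_combination 2 * absorb

/-- For positive integers `m` and `n` with `n ≥ 2` and `m(n-1) ≥ n`, the identity
`C(m(n-1) - 1, n - 1) + 2·C(m(n-1) - 1, n) = ((2m(n-1) - n)/n) · C(m(n-1) - 1, n - 1)`
holds. -/
theorem stmt18 (m n : ℕ) (hm : 0 < m) (hn : 2 ≤ n) (h : n ≤ m * (n - 1)) :
    (Nat.choose (m * (n - 1) - 1) (n - 1) : ℚ) +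
        2 * (Nat.choose (m * (n - 1) - 1) n : ℚ) =
      ((2 * (m : ℚ) * ((n : ℚ) - 1) - (n : ℚ)) / (n : ℚ)) *
        (Nat.choose (m * (n - 1) - 1) (n - 1) : ℚ) :=
  stmt18_general m n hm hn
end
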